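/- arXiv:1507.08517 — 3 statements merged into one kernel-verified Lean document; each statement's English description precedes it below -/
import Mathlib

section
/- Let R be a local Noetherian F_q-algebra with maximal ideal m, and Λ an F_q-algebra. Let F : Λ ⊗_{F_q} R → Λ ⊗_{F_q} R be the map λ ⊗ r ↦ λ ⊗ r^q. If I ⊆ Λ ⊗_{F_q} R is an ideal generated by F(I), and I ∩ Λ = 0 (intersecting with the image of Λ under λ ↦ λ ⊗ 1), then I = 0. -/
/-!
Choose an `F_q`-basis `(b_i)` of `Λ`: then `Λ ⊗ R` is free over `R` on the `b_i ⊗ 1`, and `F`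
raises coordinates to the `q`-th power. Let `c ⊆ R` be the ideal generated by the coordinates
of the elements of `I`. As `I` is generated by `F(I)`, `c ⊆ c^q`; so if `c ⊆ m`, then
`c = m c`, Nakayama gives `c = 0`, and `I = 0`.

Otherwise some element of `I` has a unit coordinate. Take such a `z` of minimal support, scaled
so that some coordinate is `1`; then every coordinate of `z - F z` lies in `m` (else `z - F z`
would have smaller support), so each coordinate of `z` is congruent mod `m` to some `t_i ∈ F_q`.
Hence `F^n z ≡ (∑ t_i b_i) ⊗ 1` modulo `m^(q^n)`, all supported on the finite support of `z`.
By Krull's intersection theorem for the finitely generated `R`-module of coordinate vectors on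
that support, `(∑ t_i b_i) ⊗ 1 ∈ I`, although `∑ t_i b_i ≠ 0`.
-/

open TensorProduct

section FiniteFieldAlgebra

variable {Fq R : Type*} [Field Fq] [Fintype Fq] [CommRing R] [Algebra Fq R]

open Polynomial in
lemma prod_sub_algebraMap_eq_pow_card_sub (r : R) :
    ∏ t : Fq, (r - algebraMap Fq R t) = r ^ Fintype.card Fq - r := by
  have hmonic : ((X : Fq[X]) ^ Fintype.card Fq - X).Monic :=
    monic_X_pow_sub (by rw [degree_X]; exact_mod_cast Fintype.one_lt_card)
  have hcard : Multiset.card ((X : Fq[X]) ^ Fintype.card Fq - X).roots =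
      ((X : Fq[X]) ^ Fintype.card Fq - X).natDegree := by
    rw [FiniteField.roots_X_pow_card_sub_X,
      FiniteField.X_pow_card_sub_X_natDegree_eq Fq Fintype.one_lt_card]
    simp [Finset.card_univ]
  have hprod := prod_multiset_X_sub_C_of_monic_of_roots_card_eq hmonic hcard
  rw [FiniteField.roots_X_pow_card_sub_X, ← Finset.prod_eq_multiset_prod] at hprod
  simpa [map_prod] using congrArg (aeval r) hprod

lemma exists_sub_algebraMap_mem_of_pow_card_sub_mem {P : Ideal R} [P.IsPrime] {r : R}
    (h : r ^ Fintype.card Fq - r ∈ P) : ∃ t : Fq, r - algebraMap Fq R t ∈ P := by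
  rw [← prod_sub_algebraMap_eq_pow_card_sub] at h
  obtain ⟨t, -, ht⟩ := Ideal.IsPrime.prod_mem_iff.mp h
  exact ⟨t, ht⟩

lemma pow_card_pow_sub_algebraMap_mem {J : Ideal R} {r : R} {t : Fq}
    (h : r - algebraMap Fq R t ∈ J) (n : ℕ) :
    r ^ Fintype.card Fq ^ n - algebraMap Fq R t ∈ J ^ Fintype.card Fq ^ n := by
  have hfrob (s : R) : (FiniteField.frobeniusAlgHom Fq R ^ n) s = s ^ Fintype.card Fq ^ n := by
    rw [AlgHom.coe_pow, FiniteField.coe_frobeniusAlgHom, pow_iterate]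
  rw [← hfrob, ← AlgHom.commutes (FiniteField.frobeniusAlgHom Fq R ^ n) t, ← map_sub, hfrob]
  exact Ideal.pow_mem_pow h _

end FiniteFieldAlgebra

theorem Submodule.mem_of_forall_sub_mem_pow_smul_top {R M : Type*} [CommRing R]
    [AddCommGroup M] [Module R M] {I : Ideal R} {N : Submodule R M} [IsHausdorff I (M ⧸ N)]
    {v : M} (w : ℕ → M) (hw : ∀ n, w n ∈ N) (hv : ∀ n, v - w n ∈ I ^ n • (⊤ : Submodule R M)) :
    v ∈ N := by
  rw [← Submodule.Quotient.mk_eq_zero]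
  refine IsHausdorff.haus ‹_› _ fun n => ?_
  rw [SModEq.sub_mem, sub_zero, ← sub_zero (Submodule.Quotient.mk v),
    ← (Submodule.Quotient.mk_eq_zero N).mpr (hw n), ← Submodule.Quotient.mk_sub]
  exact Submodule.smul_top_le_comap_smul_top _ N.mkQ (hv n)

theorem Pi.mem_smul_top_of_forall_mem {R S : Type*} [CommRing R] [Fintype S] [DecidableEq S]
    {J : Ideal R} {v : S → R} (hv : ∀ i, v i ∈ J) : v ∈ J • (⊤ : Submodule R (S → R)) := by
  rw [pi_eq_sum_univ v]
  exact Submodule.sum_mem _ fun i _ => Submodule.smul_mem_smul (hv i) trivial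

namespace Module.Basis

variable {Fq Λ ι : Type*} [Field Fq] [CommRing Λ] [Algebra Fq Λ] [DecidableEq ι]
  (b : Basis ι Fq Λ)
variable (R : Type*) [CommRing R] [Algebra Fq R]

noncomputable def tensorCoord : Λ ⊗[Fq] R ≃ₗ[Fq] (ι →₀ R) :=
  (TensorProduct.congr b.repr (LinearEquiv.refl Fq R)).trans
    (TensorProduct.finsuppScalarLeft Fq R ι)

variable {R}

@[simp] lemma tensorCoord_tmul (l : Λ) (r : R) (α : ι) :
    b.tensorCoord R (l ⊗ₜ r) α = b.repr l α • r := by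
  simp [tensorCoord]

lemma tensorCoord_basis_tmul (i : ι) (r : R) :
    b.tensorCoord R (b i ⊗ₜ r) = Finsupp.single i r := by
  ext α
  simp [Finsupp.single_apply, ite_smul]

lemma sum_basis_tmul_tensorCoord (x : Λ ⊗[Fq] R) :
    ((b.tensorCoord R x).sum fun i r => b i ⊗ₜ[Fq] r) = x := by
  apply (b.tensorCoord R).injective
  simp only [map_finsuppSum, tensorCoord_basis_tmul, Finsupp.sum_single]

lemma tensorCoord_one_tmul_mul (u : R) (x : Λ ⊗[Fq] R) (α : ι) :
    b.tensorCoord R ((1 ⊗ₜ u) * x) α = u * b.tensorCoord R x α := by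
  induction x using TensorProduct.induction_on with
  | zero => simp
  | tmul l r => simp [Algebra.TensorProduct.tmul_mul_tmul, Algebra.smul_def, mul_left_comm]
  | add y z hy hz => simp [mul_add, hy, hz]

lemma tensorCoord_map {R' : Type*} [CommRing R'] [Algebra Fq R'] (g : R →ₐ[Fq] R')
    (x : Λ ⊗[Fq] R) (α : ι) :
    b.tensorCoord R' (Algebra.TensorProduct.map (AlgHom.id Fq Λ) g x) α =
      g (b.tensorCoord R x α) := by
  induction x using TensorProduct.induction_on with
  | zero => simp
  | tmul l r => simp
  | add y z hy hz => simp [hy, hz]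

lemma mem_map_includeRight_iff (N : Ideal R) {x : Λ ⊗[Fq] R} :
    x ∈ N.map Algebra.TensorProduct.includeRight ↔ ∀ α, b.tensorCoord R x α ∈ N := by
  have hker := Algebra.TensorProduct.lTensor_ker (A := Λ) _ (Ideal.Quotient.mkₐ_surjective Fq N)
  rw [show RingHom.ker (Ideal.Quotient.mkₐ Fq N) = N from Ideal.Quotient.mkₐ_ker Fq N] at hker
  rw [← hker, RingHom.mem_ker, ← (b.tensorCoord _).map_eq_zero_iff, Finsupp.ext_iff]
  simp [tensorCoord_map, Ideal.Quotient.eq_zero_iff_mem]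

def coordIdeal (I : Ideal (Λ ⊗[Fq] R)) : Ideal R :=
  Ideal.span {r | ∃ x ∈ I, ∃ α, b.tensorCoord R x α = r}

lemma le_map_includeRight_iff {I : Ideal (Λ ⊗[Fq] R)} {N : Ideal R} :
    I ≤ N.map Algebra.TensorProduct.includeRight ↔ b.coordIdeal I ≤ N := by
  rw [coordIdeal, Ideal.span_le, SetLike.le_def]
  simp only [b.mem_map_includeRight_iff]
  constructor
  · rintro h _ ⟨x, hx, α, rfl⟩
    exact h hx α
  · exact fun h x hx α => h ⟨x, hx, α, rfl⟩

end Module.Basis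

section FrobeniusStableIdeal

open IsLocalRing

variable {Fq Λ R ι : Type*} [Field Fq] [Fintype Fq] [CommRing Λ] [Algebra Fq Λ]
  [CommRing R] [Algebra Fq R] [DecidableEq ι] (b : Module.Basis ι Fq Λ)
  {F : Λ ⊗[Fq] R →+* Λ ⊗[Fq] R}

lemma tensorCoord_apply_eq_pow_card
    (hF : ∀ (l : Λ) (r : R), F (l ⊗ₜ r) = l ⊗ₜ (r ^ Fintype.card Fq))
    (x : Λ ⊗[Fq] R) (α : ι) :
    b.tensorCoord R (F x) α = b.tensorCoord R x α ^ Fintype.card Fq := by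
  have hFrob : F x = Algebra.TensorProduct.map (AlgHom.id Fq Λ)
      (FiniteField.frobeniusAlgHom Fq R) x := by
    induction x using TensorProduct.induction_on with
    | zero => simp
    | tmul l r => simp [hF]
    | add y z hy hz => simp [hy, hz]
  rw [hFrob, b.tensorCoord_map, FiniteField.frobeniusAlgHom_apply]

lemma tensorCoord_iterate_apply_eq_pow_card_pow
    (hF : ∀ (l : Λ) (r : R), F (l ⊗ₜ r) = l ⊗ₜ (r ^ Fintype.card Fq))
    (n : ℕ) (x : Λ ⊗[Fq] R) (α : ι) :
    b.tensorCoord R (F^[n] x) α = b.tensorCoord R x α ^ Fintype.card Fq ^ n := by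
  induction n with
  | zero => simp
  | succ n ih =>
    rw [Function.iterate_succ_apply', tensorCoord_apply_eq_pow_card b hF, ih, ← pow_mul, pow_succ]

theorem eq_bot_of_coordIdeal_le_maximalIdeal [IsNoetherianRing R] [IsLocalRing R]
    (hF : ∀ (l : Λ) (r : R), F (l ⊗ₜ r) = l ⊗ₜ (r ^ Fintype.card Fq))
    {I : Ideal (Λ ⊗[Fq] R)} (hI : I = I.map F) (hle : b.coordIdeal I ≤ maximalIdeal R) :
    I = ⊥ := by
  set c := b.coordIdeal I
  set q := Fintype.card Fq
  have hIc : I ≤ c.map Algebra.TensorProduct.includeRight :=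
    b.le_map_includeRight_iff.mpr le_rfl
  have hFc : (c.map Algebra.TensorProduct.includeRight).map F ≤
      (c ^ q).map Algebra.TensorProduct.includeRight := by
    refine Ideal.map_le_iff_le_comap.mpr <| Ideal.map_le_iff_le_comap.mpr fun r hr => ?_
    simpa [hF] using Ideal.mem_map_of_mem Algebra.TensorProduct.includeRight
      (Ideal.pow_mem_pow hr q)
  have hcq : c ≤ c ^ q :=
    b.le_map_includeRight_iff.mp (hI.le.trans ((Ideal.map_mono hIc).trans hFc))
  have hcm : c ≤ maximalIdeal R • c := calc
    c ≤ c ^ (q - 1 + 1) := by rwa [Nat.sub_add_cancel Fintype.card_pos]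
    _ = c ^ (q - 1) * c := pow_succ c (q - 1)
    _ ≤ maximalIdeal R * c :=
      Ideal.mul_mono_left
        ((Ideal.pow_le_self (Nat.sub_ne_zero_of_lt Fintype.one_lt_card)).trans hle)
  have hc : c = ⊥ := Submodule.eq_bot_of_le_smul_of_le_jacobson_bot _ _
    (IsNoetherian.noetherian c) hcm (maximalIdeal_le_jacobson _)
  rw [eq_bot_iff, ← Ideal.map_bot (f := Algebra.TensorProduct.includeRight), ← hc]
  exact hIc

lemma exists_tensorCoord_eq_one_and_pow_card_sub_mem [IsLocalRing R]
    (hF : ∀ (l : Λ) (r : R), F (l ⊗ₜ r) = l ⊗ₜ (r ^ Fintype.card Fq))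
    {I : Ideal (Λ ⊗[Fq] R)} (hFI : ∀ x ∈ I, F x ∈ I) {x : Λ ⊗[Fq] R} (hx : x ∈ I) {α : ι}
    (hα : b.tensorCoord R x α ∉ maximalIdeal R) :
    ∃ z ∈ I, ∃ α₀, b.tensorCoord R z α₀ = 1 ∧
      ∀ β, b.tensorCoord R z β ^ Fintype.card Fq - b.tensorCoord R z β ∈ maximalIdeal R := by
  induction hn : (b.tensorCoord R x).support.card using Nat.strong_induction_on
    generalizing x α with
  | _ n ih =>
  obtain ⟨u, hu⟩ := notMem_maximalIdeal.mp hα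
  set z := (1 ⊗ₜ (↑u⁻¹ : R)) * x
  have hzI : z ∈ I := I.mul_mem_left _ hx
  have hz : ∀ β, b.tensorCoord R z β = ↑u⁻¹ * b.tensorCoord R x β :=
    b.tensorCoord_one_tmul_mul _ x
  have hzα : b.tensorCoord R z α = 1 := by rw [hz, ← hu, Units.inv_mul]
  by_cases hfix :
      ∀ β, b.tensorCoord R z β ^ Fintype.card Fq - b.tensorCoord R z β ∈ maximalIdeal R
  · exact ⟨z, hzI, α, hzα, hfix⟩
  obtain ⟨β, hβ⟩ := not_forall.mp hfix
  have hw : ∀ γ, b.tensorCoord R (F z - z) γ =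
      b.tensorCoord R z γ ^ Fintype.card Fq - b.tensorCoord R z γ := fun γ => by
    rw [map_sub, Finsupp.sub_apply, tensorCoord_apply_eq_pow_card b hF]
  have hsupp : (b.tensorCoord R (F z - z)).support ⊆ (b.tensorCoord R x).support.erase α := by
    intro γ hγ
    rw [Finsupp.mem_support_iff, hw] at hγ
    rw [Finset.mem_erase, Finsupp.mem_support_iff]
    refine ⟨fun h => hγ (by rw [h, hzα, one_pow, sub_self]), fun h => hγ ?_⟩
    rw [hz, h, mul_zero, zero_pow Fintype.card_ne_zero, sub_zero]
  have hlt : (b.tensorCoord R (F z - z)).support.card < n := hn ▸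
    (Finset.card_le_card hsupp).trans_lt (Finset.card_erase_lt_of_mem
      (Finsupp.mem_support_iff.mpr fun h => by simp [hz, h] at hzα))
  exact ih _ hlt (I.sub_mem (hFI z hzI) hzI) (by rwa [hw]) rfl

lemma tmul_one_mem_of_forall_sub_algebraMap_mem [IsNoetherianRing R] [IsLocalRing R]
    (hF : ∀ (l : Λ) (r : R), F (l ⊗ₜ r) = l ⊗ₜ (r ^ Fintype.card Fq))
    {I : Ideal (Λ ⊗[Fq] R)} (hFI : ∀ x ∈ I, F x ∈ I) {z : Λ ⊗[Fq] R} (hz : z ∈ I)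
    {t : ι → Fq} (ht : ∀ α, b.tensorCoord R z α - algebraMap Fq R (t α) ∈ maximalIdeal R) :
    (∑ α ∈ (b.tensorCoord R z).support, t α • b α) ⊗ₜ[Fq] (1 : R) ∈ I := by
  set S := (b.tensorCoord R z).support
  let N : Submodule R (S → R) :=
    { carrier := {v | ∑ α : S, b α ⊗ₜ[Fq] v α ∈ I}
      add_mem' := fun hv hw => by simpa [tmul_add, Finset.sum_add_distrib] using I.add_mem hv hw
      zero_mem' := by simp
      smul_mem' := fun r v hv => by
        simpa [Finset.mul_sum, Algebra.TensorProduct.tmul_mul_tmul] using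
          I.mul_mem_left (1 ⊗ₜ r) hv }
  have hiter : ∀ n, F^[n] z ∈ I := fun n => Set.MapsTo.iterate hFI n hz
  have hsum : ∀ n, ∑ α : S, b α ⊗ₜ[Fq] b.tensorCoord R (F^[n] z) α = F^[n] z := fun n => by
    conv_rhs => rw [← b.sum_basis_tmul_tensorCoord (F^[n] z)]
    rw [Finset.sum_coe_sort S (fun α => b α ⊗ₜ[Fq] b.tensorCoord R (F^[n] z) α),
      Finsupp.sum_of_support_subset]
    · intro α
      simp only [Finsupp.mem_support_iff, ne_eq, tensorCoord_iterate_apply_eq_pow_card_pow b hF]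
      exact fun h => Finsupp.mem_support_iff.mpr fun h0 => h (by
        rw [h0, zero_pow (pow_ne_zero _ Fintype.card_ne_zero)])
    · simp
  have hmem : (fun α : S => algebraMap Fq R (t α)) ∈ N := by
    refine Submodule.mem_of_forall_sub_mem_pow_smul_top (I := maximalIdeal R)
      (fun n α => b.tensorCoord R (F^[n] z) α)
      (fun n => by change _ ∈ I; rw [hsum]; exact hiter n)
      fun n => Pi.mem_smul_top_of_forall_mem fun α => ?_
    rw [Pi.sub_apply, tensorCoord_iterate_apply_eq_pow_card_pow b hF, ← neg_sub]
    exact Ideal.pow_le_pow_right (Nat.lt_pow_self Fintype.one_lt_card).le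
      (neg_mem (pow_card_pow_sub_algebraMap_mem (ht α) n))
  have hc : (∑ α ∈ S, t α • b α) ⊗ₜ[Fq] (1 : R) =
      ∑ α : S, b α ⊗ₜ[Fq] algebraMap Fq R (t α) := by
    rw [sum_tmul, ← Finset.sum_coe_sort S]
    simp [Algebra.algebraMap_eq_smul_one, smul_tmul']
  rw [hc]
  exact hmem

lemma exists_ne_zero_tmul_one_mem [IsNoetherianRing R] [IsLocalRing R]
    (hF : ∀ (l : Λ) (r : R), F (l ⊗ₜ r) = l ⊗ₜ (r ^ Fintype.card Fq))
    {I : Ideal (Λ ⊗[Fq] R)} (hFI : ∀ x ∈ I, F x ∈ I) {x : Λ ⊗[Fq] R} (hx : x ∈ I) {α : ι}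
    (hα : b.tensorCoord R x α ∉ maximalIdeal R) :
    ∃ c : Λ, c ≠ 0 ∧ c ⊗ₜ[Fq] (1 : R) ∈ I := by
  obtain ⟨z, hz, α₀, hzα₀, hfix⟩ :=
    exists_tensorCoord_eq_one_and_pow_card_sub_mem b hF hFI hx hα
  choose t ht using fun β => exists_sub_algebraMap_mem_of_pow_card_sub_mem (hfix β)
  refine ⟨_, fun hc => ?_, tmul_one_mem_of_forall_sub_algebraMap_mem b hF hFI hz ht⟩
  have ht₀ : t α₀ = 0 := linearIndependent_iff'.mp b.linearIndependent _ _ hc α₀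
    (Finsupp.mem_support_iff.mpr (hzα₀ ▸ one_ne_zero))
  have h1 := ht α₀
  rw [hzα₀, ht₀, map_zero, sub_zero] at h1
  exact (maximalIdeal.isMaximal R).ne_top ((Ideal.eq_top_iff_one _).mpr h1)

end FrobeniusStableIdeal

/-- **Invariant ideal theorem, key case.** Let `R` be a local Noetherian `F_q`-algebra,
`Λ` an `F_q`-algebra, and `F` the endomorphism of `Λ ⊗[F_q] R` with `F (λ ⊗ r) = λ ⊗ r^q`.
If an ideal `I` is generated by `F(I)` and `I ∩ Λ = 0`, then `I = 0`. -/
theorem invariant_ideal_of_cap_bot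
    (Fq : Type) [Field Fq] [Fintype Fq]
    (Λ : Type) [CommRing Λ] [Algebra Fq Λ]
    (R : Type) [CommRing R] [Algebra Fq R] [IsNoetherianRing R] [IsLocalRing R]
    (F : (Λ ⊗[Fq] R) →+* (Λ ⊗[Fq] R))
    (hF : ∀ (l : Λ) (r : R), F (l ⊗ₜ[Fq] r) = l ⊗ₜ[Fq] (r ^ Fintype.card Fq))
    (I : Ideal (Λ ⊗[Fq] R))
    (hgen : I = Ideal.span (⇑F '' (I : Set (Λ ⊗[Fq] R))))
    (hcap : ∀ l : Λ, l ⊗ₜ[Fq] (1 : R) ∈ I → l = 0) :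
    I = ⊥ := by
  classical
  let b := Module.Basis.ofVectorSpace Fq Λ
  by_cases hle : b.coordIdeal I ≤ IsLocalRing.maximalIdeal R
  · exact eq_bot_of_coordIdeal_le_maximalIdeal b hF hgen hle
  have hFI : ∀ x ∈ I, F x ∈ I := fun x hx => hgen ▸ Ideal.mem_map_of_mem F hx
  obtain ⟨_, ⟨x, hx, α, rfl⟩, hα⟩ := Set.not_subset.mp (mt Ideal.span_le.mpr hle)
  obtain ⟨c, hc, hcI⟩ := exists_ne_zero_tmul_one_mem b hF hFI hx hα
  exact absurd (hcap c hcI) hc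
end

section
/- Let R be a Noetherian local F_q-algebra with maximal ideal m, Λ an F_q-algebra, F the Frobenius endomorphism of Λ ⊗_{F_q} R (identity on Λ, r ↦ r^q on R). If I ⊆ Λ ⊗_{F_q} R is an ideal generated by F(I) with I ∩ Λ = 0, then I ⊆ Λ ⊗_{F_q} m. -/
/-!
Reduce modulo `m`. In `Λ ⊗ k`, `k` the residue field, take a nonzero element of the image of `I`
with the fewest nonzero coordinates in an `F_q`-basis of `Λ` and scale one coordinate to `1`.
Then `F y - y` has fewer nonzero coordinates, so it vanishes; the coordinates of `y` are roots of
`X^q - X`, i.e. lie in `F_q`, and `y = l ⊗ 1` with `l ≠ 0`. It remains to lift: if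
`l ⊗ 1 ∈ I + Λ ⊗ m`, then iterating `F` gives `l ⊗ 1 ∈ I + Λ ⊗ m^(q^b)` for all `b`, and Krull's
intersection theorem on a finitely generated module of coefficient vectors puts `l ⊗ 1` in `I`.
-/

open TensorProduct IsLocalRing

open Polynomial in
theorem FiniteField.exists_algebraMap_eq_of_pow_card_eq {K L : Type*} [Field K] [Fintype K]
    [CommRing L] [IsDomain L] [Algebra K L] {t : L} (ht : t ^ Fintype.card K = t) :
    ∃ c : K, algebraMap K L c = t := by
  classical
  have hprod : ∏ c : K, (X - C c) = (X ^ Fintype.card K - X : K[X]) := by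
    have hdeg := X_pow_card_sub_X_natDegree_eq K (Fintype.one_lt_card (α := K))
    have := prod_multiset_X_sub_C_of_monic_of_roots_card_eq
      (monic_X_pow_sub (p := (X : K[X]))
        (by rw [degree_X]; exact_mod_cast Fintype.one_lt_card (α := K)))
      (by rw [roots_X_pow_card_sub_X K, hdeg]; rfl)
    rwa [roots_X_pow_card_sub_X K] at this
  have := congrArg (fun p => (p.map (algebraMap K L)).eval t) hprod
  simp only [Polynomial.map_prod, Polynomial.eval_prod, Polynomial.map_sub, Polynomial.map_pow,
    map_X, map_C, eval_sub, eval_pow, eval_X, eval_C, ht, sub_self] at this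
  obtain ⟨c, -, hc⟩ := Finset.prod_eq_zero_iff.mp this
  exact ⟨c, (sub_eq_zero.mp hc).symm⟩

theorem TensorProduct.equivFinsuppOfBasisLeft_lTensor {R M N P ι : Type*} [CommSemiring R]
    [AddCommMonoid M] [AddCommMonoid N] [AddCommMonoid P] [Module R M] [Module R N] [Module R P]
    [DecidableEq ι] (b : Module.Basis ι R M) (f : N →ₗ[R] P) (x : M ⊗[R] N) :
    equivFinsuppOfBasisLeft b (f.lTensor M x) =
      (equivFinsuppOfBasisLeft b x).mapRange f f.map_zero := by
  induction x with
  | zero => simp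
  | tmul m n => ext i; simp
  | add x y hx hy => simp [hx, hy, Finsupp.mapRange_add]

theorem Algebra.TensorProduct.one_tmul_mul_eq_lTensor_mulLeft {K A B : Type*} [CommRing K]
    [Ring A] [Ring B] [Algebra K A] [Algebra K B] (c : B) (x : A ⊗[K] B) :
    (1 ⊗ₜ c) * x = (LinearMap.mulLeft K c).lTensor A x := by
  induction x with
  | zero => simp
  | tmul a b => simp
  | add x y hx hy => simp [mul_add, hx, hy]

theorem TensorProduct.exists_eq_tmul_one_of_lTensor_frobeniusAlgHom_eq {K L M : Type*} [Field K]
    [Fintype K] [CommRing L] [IsDomain L] [Algebra K L] [AddCommGroup M] [Module K M]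
    {y : M ⊗[K] L} (hy : (FiniteField.frobeniusAlgHom K L).toLinearMap.lTensor M y = y) :
    ∃ m : M, y = m ⊗ₜ 1 := by
  classical
  let b := Module.Free.chooseBasis K M
  let e := equivFinsuppOfBasisLeft (N := L) b
  have hfix : ∀ i, e y i ^ Fintype.card K = e y i := fun i => by
    have := congr($(congrArg e hy) i)
    rwa [equivFinsuppOfBasisLeft_lTensor, Finsupp.mapRange_apply] at this
  choose c hc using fun i => FiniteField.exists_algebraMap_eq_of_pow_card_eq (hfix i)
  refine ⟨∑ i ∈ (e y).support, c i • b i, ?_⟩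
  conv_lhs => rw [← e.symm_apply_apply y]
  rw [equivFinsuppOfBasisLeft_symm_apply, Finsupp.sum, sum_tmul]
  refine Finset.sum_congr rfl fun i _ => ?_
  rw [← hc i, Algebra.algebraMap_eq_smul_one, smul_tmul]

theorem Ideal.eq_bot_of_lTensor_frobeniusAlgHom_mem {K L A : Type*} [Field K] [Fintype K] [Field L]
    [Algebra K L] [Ring A] [Algebra K A] (I : Ideal (A ⊗[K] L))
    (hI : ∀ x ∈ I, (FiniteField.frobeniusAlgHom K L).toLinearMap.lTensor A x ∈ I)
    (hcap : ∀ a : A, a ⊗ₜ[K] (1 : L) ∈ I → a = 0) : I = ⊥ := by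
  classical
  let e := equivFinsuppOfBasisLeft (N := L) (Module.Free.chooseBasis K A)
  rw [eq_bot_iff]
  intro x hx
  rw [Submodule.mem_bot]
  induction hn : (e x).support.card using Nat.strong_induction_on generalizing x with
  | _ n ih =>
    by_contra hx0
    obtain ⟨j, hj⟩ : (e x).support.Nonempty := by
      simpa [Finsupp.support_nonempty_iff] using hx0
    set y := (1 ⊗ₜ (e x j)⁻¹) * x with hy_def
    have hy : y ∈ I := I.mul_mem_left _ hx
    have hey : ∀ i, e y i = (e x j)⁻¹ * e x i := fun i => by
      rw [hy_def, Algebra.TensorProduct.one_tmul_mul_eq_lTensor_mulLeft,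
        equivFinsuppOfBasisLeft_lTensor, Finsupp.mapRange_apply, LinearMap.mulLeft_apply]
    have hyj : e y j = 1 := by
      rw [hey, inv_mul_cancel₀ (Finsupp.mem_support_iff.mp hj)]
    set z := (FiniteField.frobeniusAlgHom K L).toLinearMap.lTensor A y - y
    have hz : z ∈ I := I.sub_mem (hI y hy) hy
    have hez : ∀ i, e z i = e y i ^ Fintype.card K - e y i := fun i => by
      rw [map_sub, Finsupp.sub_apply, equivFinsuppOfBasisLeft_lTensor, Finsupp.mapRange_apply]
      rfl
    have hsupp : (e z).support ⊂ (e x).support := by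
      refine Finset.ssubset_iff_of_subset (fun i hi => ?_) |>.mpr ⟨j, hj, ?_⟩
      · rw [Finsupp.mem_support_iff] at hi ⊢
        contrapose! hi
        rw [hez, hey, hi, mul_zero, zero_pow Fintype.card_ne_zero, sub_zero]
      · rw [Finsupp.mem_support_iff, hez, hyj, one_pow, sub_self, not_not]
    obtain ⟨a, ha⟩ := exists_eq_tmul_one_of_lTensor_frobeniusAlgHom_eq
      (sub_eq_zero.mp (ih _ (hn ▸ Finset.card_lt_card hsupp) hz rfl))
    rw [ha] at hy hyj
    rw [hcap a hy, zero_tmul, map_zero, Finsupp.zero_apply] at hyj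
    exact zero_ne_one hyj

theorem Ideal.exists_sum_tmul_of_mem_map_includeRight {K A B : Type*} [CommRing K] [Ring A]
    [Algebra K A] [Ring B] [Algebra K B] {J : Ideal B} {x : A ⊗[K] B}
    (hx : x ∈ J.map (Algebra.TensorProduct.includeRight : B →ₐ[K] A ⊗[K] B)) :
    ∃ (n : ℕ) (a : Fin n → A) (b : Fin n → B), (∀ i, b i ∈ J) ∧ x = ∑ i, a i ⊗ₜ b i := by
  replace hx : x ∈
      (J.map (Algebra.TensorProduct.includeRight : B →ₐ[K] A ⊗[K] B)).restrictScalars K := hx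
  rw [Ideal.map_includeRight_eq] at hx
  obtain ⟨y, rfl⟩ := hx
  obtain ⟨n, a, b, rfl⟩ := exists_sum_tmul_eq y
  exact ⟨n, a, fun i => b i, fun i => (b i).2, by simp⟩

theorem Submodule.mem_of_forall_mem_sup_pow_smul_top {R M : Type*} [CommRing R]
    [IsNoetherianRing R] [IsLocalRing R] [AddCommGroup M] [Module R M] [Module.Finite R M]
    (N : Submodule R M) {v : M} (h : ∀ b : ℕ, v ∈ N ⊔ maximalIdeal R ^ b • ⊤) : v ∈ N := by
  rw [← Submodule.Quotient.mk_eq_zero, ← Submodule.mem_bot R,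
    ← Ideal.iInf_pow_smul_eq_bot_of_isLocalRing _ (maximalIdeal.isMaximal R).ne_top,
    Submodule.mem_iInf]
  intro b
  simpa [Submodule.map_sup, Submodule.map_smul''] using Submodule.mem_map_of_mem (f := N.mkQ) (h b)

theorem Submodule.mem_of_forall_exists_sub_mem_of_apply_mem_pow {R ι : Type*} [CommRing R]
    [IsNoetherianRing R] [IsLocalRing R] [Fintype ι] (N : Submodule R (ι → R)) {v : ι → R}
    (h : ∀ b : ℕ, ∃ w : ι → R, (∀ i, w i ∈ maximalIdeal R ^ b) ∧ v - w ∈ N) : v ∈ N := by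
  classical
  refine N.mem_of_forall_mem_sup_pow_smul_top fun b => ?_
  obtain ⟨w, hw, hvw⟩ := h b
  rw [← sub_add_cancel v w]
  refine Submodule.add_mem_sup hvw ?_
  rw [pi_eq_sum_univ w]
  exact Submodule.sum_mem _ fun i _ => Submodule.smul_mem_smul (hw i) trivial

theorem Ideal.tmul_one_mem_of_sub_mem_map_maximalIdeal {K A R : Type*} [Field K] [Fintype K]
    [Ring A] [Algebra K A] [CommRing R] [Algebra K R] [IsNoetherianRing R] [IsLocalRing R]
    {I : Ideal (A ⊗[K] R)}
    (hI : ∀ x ∈ I, (FiniteField.frobeniusAlgHom K R).toLinearMap.lTensor A x ∈ I)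
    {a : A} {x : A ⊗[K] R} (hx : x ∈ I)
    (hax : a ⊗ₜ 1 - x ∈
      (maximalIdeal R).map (Algebra.TensorProduct.includeRight : R →ₐ[K] A ⊗[K] R)) :
    a ⊗ₜ 1 ∈ I := by
  obtain ⟨n, μ, s, hs, hμs⟩ := Ideal.exists_sum_tmul_of_mem_map_includeRight hax
  let g : Fin (n + 1) → A := Fin.cons a μ
  let θ : (Fin (n + 1) → R) → A ⊗[K] R := fun c => ∑ i, g i ⊗ₜ c i
  let N : Submodule R (Fin (n + 1) → R) :=
    { carrier := {c | θ c ∈ I}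
      add_mem' := fun {c d} hc hd => by
        simpa [θ, tmul_add, Finset.sum_add_distrib] using I.add_mem hc hd
      zero_mem' := by simp [θ]
      smul_mem' := fun r c hc => by
        simpa [θ, Finset.mul_sum] using I.mul_mem_left (1 ⊗ₜ r) hc }
  let φ := FiniteField.frobeniusAlgHom K (Fin (n + 1) → R)
  have hφ : ∀ c ∈ N, φ c ∈ N := fun c hc => by
    simpa [N, θ, φ, map_sum] using hI _ hc
  let v : Fin (n + 1) → R := Pi.single 0 1
  have hφv : φ v = v := by
    ext i; cases i using Fin.cases <;> simp [φ, v]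
  have key : ∀ b : ℕ, ∃ w, (∀ i, w i ∈ maximalIdeal R ^ (b + 1)) ∧ v - w ∈ N := by
    intro b
    induction b with
    | zero =>
      refine ⟨Fin.cons 0 s, fun i => ?_, ?_⟩
      · cases i using Fin.cases <;> simp [hs]
      · show θ _ ∈ I
        have : θ (v - Fin.cons 0 s) = a ⊗ₜ 1 - ∑ i, μ i ⊗ₜ s i := by
          simp [θ, g, v, Fin.sum_univ_succ, tmul_neg, sub_eq_add_neg]
        rwa [this, ← hμs, sub_sub_cancel]
    | succ b ih =>
      obtain ⟨w, hw, hvw⟩ := ih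
      refine ⟨φ w, fun i => ?_, by simpa [hφv] using hφ _ hvw⟩
      have hq : b + 1 + 1 ≤ (b + 1) * Fintype.card K := by
        have := Fintype.one_lt_card (α := K)
        nlinarith
      exact Ideal.pow_le_pow_right hq (pow_mul (maximalIdeal R) _ _ ▸ Ideal.pow_mem_pow (hw i) _)
  have hv : v ∈ N := N.mem_of_forall_exists_sub_mem_of_apply_mem_pow fun b =>
    (key b).imp fun w hw => ⟨fun i => Ideal.pow_le_pow_right b.le_succ (hw.1 i), hw.2⟩
  simpa [N, θ, v, Fin.sum_univ_succ, g] using hv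

theorem Ideal.le_map_maximalIdeal_of_lTensor_frobeniusAlgHom_mem {K A R : Type*} [Field K]
    [Fintype K] [Ring A] [Algebra K A] [CommRing R] [Algebra K R] [IsNoetherianRing R]
    [IsLocalRing R] (I : Ideal (A ⊗[K] R))
    (hI : ∀ x ∈ I, (FiniteField.frobeniusAlgHom K R).toLinearMap.lTensor A x ∈ I)
    (hcap : ∀ a : A, a ⊗ₜ[K] (1 : R) ∈ I → a = 0) :
    I ≤ (maximalIdeal R).map (Algebra.TensorProduct.includeRight : R →ₐ[K] A ⊗[K] R) := by
  let res := IsScalarTower.toAlgHom K R (IsLocalRing.ResidueField R)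
  let π := Algebra.TensorProduct.map (AlgHom.id K A) res
  have hres : Function.Surjective res := residue_surjective
  have hπ : Function.Surjective π :=
    Algebra.TensorProduct.map_surjective _ _ Function.surjective_id hres
  have hker : RingHom.ker π =
      (maximalIdeal R).map (Algebra.TensorProduct.includeRight : R →ₐ[K] A ⊗[K] R) := by
    rw [Algebra.TensorProduct.lTensor_ker _ hres]
    congr
    exact ker_residue
  have hπ_frob : ∀ x, π ((FiniteField.frobeniusAlgHom K R).toLinearMap.lTensor A x) =
      (FiniteField.frobeniusAlgHom K (IsLocalRing.ResidueField R)).toLinearMap.lTensor A (π x) := by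
    intro x
    induction x with
    | zero => simp
    | tmul a r => simp [π]
    | add x y hx hy => simp [hx, hy]
  rw [← hker, ← Ideal.map_eq_bot_iff_le_ker]
  refine Ideal.eq_bot_of_lTensor_frobeniusAlgHom_mem _ (fun y hy => ?_) (fun a ha => ?_)
  · obtain ⟨x, hx, rfl⟩ := (Ideal.mem_map_iff_of_surjective π hπ).mp hy
    rw [← hπ_frob]
    exact Ideal.mem_map_of_mem _ (hI x hx)
  · obtain ⟨x, hx, hxa⟩ := (Ideal.mem_map_iff_of_surjective π hπ).mp ha
    refine hcap a (Ideal.tmul_one_mem_of_sub_mem_map_maximalIdeal hI hx ?_)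
    rw [← hker, RingHom.mem_ker, map_sub, hxa]
    simp [π]

/-- Let `R` be a Noetherian local `F_q`-algebra with maximal ideal `m`, `Λ` an `F_q`-algebra,
`F` the Frobenius endomorphism of `Λ ⊗[F_q] R` (identity on `Λ`, `r ↦ r^q` on `R`). If an
ideal `I` is generated by `F(I)` and `I ∩ Λ = 0`, then `I ⊆ Λ ⊗[F_q] m`. -/
theorem invariant_ideal_le_tensor_maximalIdeal
    (Fq : Type) [Field Fq] [Fintype Fq]
    (Λ : Type) [CommRing Λ] [Algebra Fq Λ]
    (R : Type) [CommRing R] [Algebra Fq R] [IsNoetherianRing R] [IsLocalRing R]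
    (F : (Λ ⊗[Fq] R) →+* (Λ ⊗[Fq] R))
    (hF : ∀ (l : Λ) (r : R), F (l ⊗ₜ[Fq] r) = l ⊗ₜ[Fq] (r ^ Fintype.card Fq))
    (I : Ideal (Λ ⊗[Fq] R))
    (hgen : I = Ideal.span (⇑F '' (I : Set (Λ ⊗[Fq] R))))
    (hcap : ∀ l : Λ, l ⊗ₜ[Fq] (1 : R) ∈ I → l = 0) :
    I ≤ Ideal.map (Algebra.TensorProduct.includeRight : R →ₐ[Fq] Λ ⊗[Fq] R).toRingHom
          (IsLocalRing.maximalIdeal R) := by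
  have hF_eq : ∀ x, F x = (FiniteField.frobeniusAlgHom Fq R).toLinearMap.lTensor Λ x := fun x => by
    induction x with
    | zero => simp
    | tmul l r => simp [hF]
    | add x y hx hy => simp [hx, hy]
  refine Ideal.le_map_maximalIdeal_of_lTensor_frobeniusAlgHom_mem I (fun x hx => ?_) hcap
  rw [← hF_eq, hgen]
  exact Ideal.subset_span ⟨x, hx, rfl⟩
end

section
/- Let X be a connected Noetherian F_q-scheme (or R a connected Noetherian F_q-algebra), Λ an F_q-algebra, and M a finitely generated Λ ⊗_{F_q} R-module with unit structure φ : F*M ≅ M. If for every maximal ideal 𝔪 ⊆ Λ the reduction M ⊗_Λ Λ/𝔪 is zero, then M = 0. -/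
/-!
The annihilator `A` of `M` is an ideal of `Λ ⊗ R` that is stable under `F`, because `M` is
spanned by the image of `φ`, and by Nakayama it is comaximal with `𝔪 ⊗ R` for every maximal
ideal `𝔪` of `Λ`. If `A` were proper it would lie in a maximal ideal `𝔫`; base change along
`R → K := (Λ ⊗ R)/𝔫` turns `A` into a Frobenius-stable ideal of `Λ ⊗ K` with the same
comaximality. Over a field `K` the Frobenius-fixed part of `Λ ⊗ K` is `Λ ⊗ 1`, and a
minimal-support argument shows that a Frobenius-stable ideal is extended from its trace on `Λ`;
comaximality with every `𝔪 ⊗ K` then makes it the unit ideal. But its image under the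
multiplication map `Λ ⊗ K → K` is the image of `A ⊆ 𝔫` in `K`, which is zero.
-/

open TensorProduct

/-- `Restrict f M` is `M` viewed as an `A`-module via restriction of scalars along the
ring homomorphism `f : A →+* B`. -/
def Restrict {A B : Type} [CommRing A] [CommRing B] (_f : A →+* B) (M : Type) : Type := M

instance {A B : Type} [CommRing A] [CommRing B] (f : A →+* B) (M : Type) [AddCommGroup M] :
    AddCommGroup (Restrict f M) := inferInstanceAs (AddCommGroup M)

instance {A B : Type} [CommRing A] [CommRing B] (f : A →+* B) (M : Type) [AddCommGroup M]
    [Module B M] : Module A (Restrict f M) := Module.compHom M f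

/-- The identity map `Restrict f M → M`. -/
def Restrict.out {A B : Type} [CommRing A] [CommRing B] {f : A →+* B} {M : Type}
    (x : Restrict f M) : M := x

/-- `g : N →ₗ[A] Restrict f M` (an `f`-semilinear map `N → M`) exhibits the `B`-module `M`
as the base change of the `A`-module `N` along `f : A →+* B`: every `f`-semilinear map from
`N` to a `B`-module `Q` factors uniquely through `g` via a `B`-linear map `M → Q`.  This is
the universal property of `B ⊗_{A,f} N ≅ M`. -/
def IsBaseChangeAlong {A B : Type} [CommRing A] [CommRing B] (f : A →+* B)
    {N M : Type} [AddCommGroup N] [Module A N] [AddCommGroup M] [Module B M]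
    (g : N →ₗ[A] Restrict f M) : Prop :=
  ∀ (Q : Type) [AddCommGroup Q] [Module B Q] (h : N →ₗ[A] Restrict f Q),
    ∃! H : M →ₗ[B] Q, ∀ n : N, H ((g n).out) = (h n).out

namespace TensorProduct

variable {k Λ K L ι : Type*} [CommRing k] [Ring Λ] [Algebra k Λ] [CommRing K] [Algebra k K]
  [CommRing L] [Algebra k L] [DecidableEq ι] (B : Module.Basis ι k Λ)

theorem equivFinsuppOfBasisLeft_one_tmul_mul (c : K) (x : Λ ⊗[k] K) :
    equivFinsuppOfBasisLeft B ((1 ⊗ₜ c) * x) = c • equivFinsuppOfBasisLeft B x := by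
  induction x using TensorProduct.induction_on with
  | zero => simp
  | tmul l d => ext i; simp
  | add x y hx hy => simp only [mul_add, map_add, hx, hy, smul_add]

theorem equivFinsuppOfBasisLeft_map_id (τ : K →ₐ[k] L) (x : Λ ⊗[k] K) :
    equivFinsuppOfBasisLeft B (Algebra.TensorProduct.map (AlgHom.id k Λ) τ x) =
      (equivFinsuppOfBasisLeft B x).mapRange τ (map_zero τ) := by
  induction x using TensorProduct.induction_on with
  | zero => simp
  | tmul l d => ext i; simp
  | add x y hx hy => simp only [map_add, hx, hy, Finsupp.mapRange_add (map_add τ)]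

end TensorProduct

namespace Algebra.TensorProduct

variable {k Λ K : Type*} [Field k] [CommRing Λ] [Algebra k Λ]

theorem exists_tmul_one_eq_of_map_eq_self [CommRing K] [Algebra k K] (τ : K →ₐ[k] K)
    (hτ : ∀ c, τ c = c → c ∈ (algebraMap k K).range) {x : Λ ⊗[k] K}
    (hx : map (AlgHom.id k Λ) τ x = x) : ∃ μ : Λ, μ ⊗ₜ 1 = x := by
  classical
  set B := Module.Basis.ofVectorSpace k Λ
  set c := TensorProduct.equivFinsuppOfBasisLeft B x
  have hc : ∀ i, τ (c i) = c i := fun i ↦ by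
    have h := congr($(TensorProduct.equivFinsuppOfBasisLeft_map_id B τ x) i)
    rw [hx] at h
    exact h.symm
  choose a ha using fun i ↦ hτ _ (hc i)
  refine ⟨c.sum fun i _ ↦ a i • B i, ?_⟩
  rw [← (TensorProduct.equivFinsuppOfBasisLeft B).symm_apply_apply x,
    TensorProduct.equivFinsuppOfBasisLeft_symm_apply, Finsupp.sum, Finsupp.sum,
    TensorProduct.sum_tmul]
  refine Finset.sum_congr rfl fun i _ ↦ ?_
  rw [← ha i, Algebra.algebraMap_eq_smul_one, TensorProduct.tmul_smul, TensorProduct.smul_tmul']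

theorem ideal_eq_bot_of_map_le_of_forall_tmul_one_mem [Field K] [Algebra k K] (τ : K →ₐ[k] K)
    (hτ : ∀ c, τ c = c → c ∈ (algebraMap k K).range) {b : Ideal (Λ ⊗[k] K)}
    (hb : b.map (map (AlgHom.id k Λ) τ) ≤ b) (hrat : ∀ μ : Λ, μ ⊗ₜ 1 ∈ b → μ = 0) :
    b = ⊥ := by
  classical
  set ε := TensorProduct.equivFinsuppOfBasisLeft (Module.Basis.ofVectorSpace k Λ) (N := K)
  suffices ∀ n, ∀ x ∈ b, (ε x).support.card = n → x = 0 from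
    eq_bot_iff.2 fun x hx ↦ (Ideal.mem_bot).2 (this _ x hx rfl)
  intro n
  induction n using Nat.strong_induction_on with | _ n ih => ?_
  intro x hx hn
  by_contra hx0
  obtain ⟨i₀, hi₀⟩ := Finsupp.support_nonempty_iff.2 ((LinearEquiv.map_ne_zero_iff ε).2 hx0)
  set y := (1 ⊗ₜ (ε x i₀)⁻¹) * x
  have hεy : ε y = (ε x i₀)⁻¹ • ε x := TensorProduct.equivFinsuppOfBasisLeft_one_tmul_mul _ _ _
  have hyi₀ : ε y i₀ = 1 := by
    rw [hεy, Finsupp.smul_apply, smul_eq_mul, inv_mul_cancel₀ (Finsupp.mem_support_iff.1 hi₀)]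
  have hy : y ∈ b := b.mul_mem_left _ hx
  -- the twist of `y` minus `y` lies in `b` and has shorter support than `x`: its coordinates are
  -- `τ c - c`, which vanish at `i₀`, where `y` has coordinate `1`
  have hfix : map (AlgHom.id k Λ) τ y = y := by
    have hmem : map (AlgHom.id k Λ) τ y - y ∈ b := sub_mem (hb (Ideal.mem_map_of_mem _ hy)) hy
    refine sub_eq_zero.1 (ih _ ?_ _ hmem rfl)
    refine hn ▸ (Finset.card_le_card fun i hi ↦ ?_).trans_lt (Finset.card_erase_lt_of_mem hi₀)
    rw [Finsupp.mem_support_iff, map_sub, TensorProduct.equivFinsuppOfBasisLeft_map_id,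
      Finsupp.sub_apply, Finsupp.mapRange_apply] at hi
    refine Finset.mem_erase.2 ⟨fun h ↦ hi (by rw [h, hyi₀, map_one, sub_self]), ?_⟩
    rw [Finsupp.mem_support_iff]
    intro h0
    apply hi
    rw [hεy, Finsupp.smul_apply, h0, smul_zero, map_zero, sub_zero]
  obtain ⟨μ, hμ⟩ := exists_tmul_one_eq_of_map_eq_self τ hτ hfix
  rw [← hμ, hrat μ (hμ ▸ hy), zero_tmul, map_zero, Finsupp.zero_apply] at hyi₀
  exact zero_ne_one hyi₀

theorem ideal_eq_map_includeLeft_comap_of_map_le [Field K] [Algebra k K] (τ : K →ₐ[k] K)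
    (hτ : ∀ c, τ c = c → c ∈ (algebraMap k K).range) {b : Ideal (Λ ⊗[k] K)}
    (hb : b.map (map (AlgHom.id k Λ) τ) ≤ b) :
    b = (b.comap (includeLeft : Λ →ₐ[k] Λ ⊗[k] K)).map (includeLeft : Λ →ₐ[k] Λ ⊗[k] K) := by
  set V := b.comap (includeLeft : Λ →ₐ[k] Λ ⊗[k] K)
  set π := map (Ideal.Quotient.mkₐ k V) (AlgHom.id k K)
  have hπ : Function.Surjective π :=
    map_surjective _ _ (Ideal.Quotient.mkₐ_surjective k V) Function.surjective_id
  have hker : RingHom.ker π = V.map (includeLeft : Λ →ₐ[k] Λ ⊗[k] K) := by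
    rw [rTensor_ker (C := K) (Ideal.Quotient.mkₐ k V) (Ideal.Quotient.mkₐ_surjective k V)]
    exact congrArg _ (Ideal.Quotient.mkₐ_ker k V)
  have hcomap : (b.map π).comap π = b := by
    rw [Ideal.comap_map_of_surjective' _ hπ, hker, sup_eq_left]
    exact Ideal.map_comap_le
  have hstable : (b.map π).map (map (AlgHom.id k (Λ ⧸ V)) τ) ≤ b.map π := by
    have hcomm : (map (AlgHom.id k (Λ ⧸ V)) τ).comp π = π.comp (map (AlgHom.id k Λ) τ) := by
      ext <;> simp [π]
    rw [Ideal.map_mapₐ, hcomm, ← Ideal.map_mapₐ]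
    exact Ideal.map_mono hb
  have hrat : ∀ μ : Λ ⧸ V, μ ⊗ₜ 1 ∈ b.map π → μ = 0 := by
    rintro ⟨μ⟩ hμ
    exact Ideal.Quotient.eq_zero_iff_mem.2 (hcomap.le hμ)
  refine le_antisymm (fun x hx ↦ ?_) Ideal.map_comap_le
  rw [← hker, RingHom.mem_ker, ← Ideal.mem_bot,
    ← ideal_eq_bot_of_map_le_of_forall_tmul_one_mem τ hτ hstable hrat]
  exact Ideal.mem_map_of_mem π hx

theorem map_includeLeft_ne_top [CommRing K] [Algebra k K] [Nontrivial K] {I : Ideal Λ}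
    (hI : I ≠ ⊤) : I.map (includeLeft : Λ →ₐ[k] Λ ⊗[k] K) ≠ ⊤ := by
  have : Nontrivial (Λ ⧸ I) := Ideal.Quotient.nontrivial_iff.2 hI
  intro h
  apply RingHom.ker_ne_top (map (Ideal.Quotient.mkₐ k I) (AlgHom.id k K))
  rw [rTensor_ker _ (Ideal.Quotient.mkₐ_surjective k I)]
  exact (congrArg _ (Ideal.Quotient.mkₐ_ker k I)).trans h

theorem ideal_eq_top_of_map_le_of_sup_eq_top [Field K] [Algebra k K] (τ : K →ₐ[k] K)
    (hτ : ∀ c, τ c = c → c ∈ (algebraMap k K).range) {a : Ideal (Λ ⊗[k] K)}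
    (ha : a.map (map (AlgHom.id k Λ) τ) ≤ a)
    (hcop : ∀ 𝔪 : Ideal Λ, 𝔪.IsMaximal → a ⊔ 𝔪.map (includeLeft : Λ →ₐ[k] Λ ⊗[k] K) = ⊤) :
    a = ⊤ := by
  rw [ideal_eq_map_includeLeft_comap_of_map_le τ hτ ha] at hcop ⊢
  set V := a.comap (includeLeft : Λ →ₐ[k] Λ ⊗[k] K)
  suffices V = ⊤ by rw [this, Ideal.map_top]
  by_contra hV
  obtain ⟨𝔪, h𝔪, hV𝔪⟩ := Ideal.exists_le_maximal V hV
  apply map_includeLeft_ne_top (k := k) (K := K) h𝔪.ne_top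
  rw [← hcop 𝔪 h𝔪, sup_eq_right.2 (Ideal.map_mono hV𝔪)]

end Algebra.TensorProduct

section FiniteField

variable {Fq Λ R : Type*} [Field Fq] [Fintype Fq] [CommRing Λ] [Algebra Fq Λ] [CommRing R]
  [Algebra Fq R]

theorem FiniteField.mem_range_algebraMap_of_pow_card_eq {L : Type*} [Field L] [Algebra Fq L]
    {x : L} (hx : x ^ Fintype.card Fq = x) : x ∈ (algebraMap Fq L).range := by
  have hsplit :
      Polynomial.Splits (Polynomial.X ^ Fintype.card Fq - Polynomial.X : Polynomial Fq) := by
    rw [Polynomial.splits_iff_card_roots, FiniteField.roots_X_pow_card_sub_X,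
      FiniteField.X_pow_card_sub_X_natDegree_eq Fq Fintype.one_lt_card]
    rfl
  refine hsplit.mem_range_of_isRoot
    (FiniteField.X_pow_card_sub_X_ne_zero Fq Fintype.one_lt_card) ?_
  simp [hx]

namespace Algebra.TensorProduct

theorem map_eq_top_of_frobenius_stable {K : Type*} [Field K] [Algebra Fq K] (ψ : R →ₐ[Fq] K)
    {A : Ideal (Λ ⊗[Fq] R)}
    (hA : A.map (map (AlgHom.id Fq Λ) (FiniteField.frobeniusAlgHom Fq R)) ≤ A)
    (hcop : ∀ 𝔪 : Ideal Λ, 𝔪.IsMaximal → A ⊔ 𝔪.map (includeLeft : Λ →ₐ[Fq] Λ ⊗[Fq] R) = ⊤) :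
    A.map (map (AlgHom.id Fq Λ) ψ) = ⊤ := by
  refine ideal_eq_top_of_map_le_of_sup_eq_top (FiniteField.frobeniusAlgHom Fq K)
    (fun _ ↦ FiniteField.mem_range_algebraMap_of_pow_card_eq) ?_ fun 𝔪 h𝔪 ↦ ?_
  · have hcomm : (map (AlgHom.id Fq Λ) (FiniteField.frobeniusAlgHom Fq K)).comp
          (map (AlgHom.id Fq Λ) ψ) =
        (map (AlgHom.id Fq Λ) ψ).comp
          (map (AlgHom.id Fq Λ) (FiniteField.frobeniusAlgHom Fq R)) := by
      ext <;> simp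
    rw [Ideal.map_mapₐ, hcomm, ← Ideal.map_mapₐ]
    exact Ideal.map_mono hA
  · have hincl : (map (AlgHom.id Fq Λ) ψ).comp includeLeft =
        (includeLeft : Λ →ₐ[Fq] Λ ⊗[Fq] K) :=
      (map_comp_includeLeft _ _).trans (AlgHom.comp_id _)
    rw [← hincl, ← Ideal.map_mapₐ, ← Ideal.map_sup, hcop 𝔪 h𝔪, Ideal.map_top]

theorem ideal_eq_top_of_frobenius_stable {A : Ideal (Λ ⊗[Fq] R)}
    (hA : A.map (map (AlgHom.id Fq Λ) (FiniteField.frobeniusAlgHom Fq R)) ≤ A)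
    (hcop : ∀ 𝔪 : Ideal Λ, 𝔪.IsMaximal → A ⊔ 𝔪.map (includeLeft : Λ →ₐ[Fq] Λ ⊗[Fq] R) = ⊤) :
    A = ⊤ := by
  by_contra hA_ne_top
  obtain ⟨𝔫, h𝔫, hA𝔫⟩ := Ideal.exists_le_maximal A hA_ne_top
  let := Ideal.Quotient.field 𝔫
  have hχ : (productMap ((Ideal.Quotient.mkₐ Fq 𝔫).comp includeLeft) (AlgHom.id Fq _)).comp
      (map (AlgHom.id Fq Λ) ((Ideal.Quotient.mkₐ Fq 𝔫).comp includeRight)) =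
      Ideal.Quotient.mkₐ Fq 𝔫 := by
    ext <;> simp [← Algebra.TensorProduct.one_def, Ideal.Quotient.mkₐ_eq_mk]
  have hmk : A.map (Ideal.Quotient.mkₐ Fq 𝔫) = ⊥ :=
    eq_bot_iff.2 ((Ideal.map_mono hA𝔫).trans (Ideal.map_quotient_self 𝔫).le)
  apply top_ne_bot (α := Ideal ((Λ ⊗[Fq] R) ⧸ 𝔫))
  rw [← hmk, ← hχ, ← Ideal.map_mapₐ,
    map_eq_top_of_frobenius_stable ((Ideal.Quotient.mkₐ Fq 𝔫).comp includeRight) hA hcop,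
    Ideal.map_top]

end Algebra.TensorProduct

end FiniteField

theorem Module.annihilator_sup_eq_top_of_smul_top_eq_top {S M : Type*} [CommRing S]
    [AddCommGroup M] [Module S M] [Module.Finite S M] {I : Ideal S}
    (h : I • (⊤ : Submodule S M) = ⊤) : Module.annihilator S M ⊔ I = ⊤ := by
  obtain ⟨s, hs1, hs0⟩ := Submodule.exists_sub_one_mem_and_smul_eq_zero_of_fg_of_le_smul I ⊤
    Module.Finite.fg_top h.ge
  have hs : s ∈ Module.annihilator S M := Module.mem_annihilator.2 fun m ↦ hs0 m trivial
  rw [Ideal.eq_top_iff_one, ← sub_sub_cancel s 1]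
  exact sub_mem (Ideal.mem_sup_left hs) (Ideal.mem_sup_right hs1)

namespace IsBaseChangeAlong

variable {A B N M : Type} [CommRing A] [CommRing B] {f : A →+* B} [AddCommGroup N] [Module A N]
  [AddCommGroup M] [Module B M] {g : N →ₗ[A] Restrict f M}

theorem span_range_eq_top (hg : IsBaseChangeAlong f g) :
    Submodule.span B (Set.range fun n ↦ (g n).out) = ⊤ := by
  set T := Submodule.span B (Set.range fun n ↦ (g n).out)
  obtain ⟨H, -, huniq⟩ := hg (M ⧸ T) 0
  have hmkQ : T.mkQ = 0 :=
    (huniq _ fun n ↦ (Submodule.Quotient.mk_eq_zero T).2 (Submodule.subset_span ⟨n, rfl⟩)).trans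
      (huniq 0 fun _ ↦ rfl).symm
  rw [← Submodule.ker_mkQ T, hmkQ, LinearMap.ker_zero]

theorem map_annihilator_le (hg : IsBaseChangeAlong f g) :
    (Module.annihilator A N).map f ≤ Module.annihilator B M := by
  refine Ideal.map_le_iff_le_comap.2 fun a ha ↦ Module.mem_annihilator.2 fun m ↦ ?_
  have hspan : Submodule.span B (Set.range fun n ↦ (g n).out) ≤
      LinearMap.ker (f a • LinearMap.id : M →ₗ[B] M) := by
    rw [Submodule.span_le]
    rintro _ ⟨n, rfl⟩
    have hgn : g (a • n) = a • g n := g.map_smul a n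
    rw [Module.mem_annihilator.1 ha n, map_zero] at hgn
    exact congrArg Restrict.out hgn.symm
  exact hspan (hg.span_range_eq_top ▸ Submodule.mem_top)

end IsBaseChangeAlong

theorem unit_module_eq_zero_of_reductions_zero_general
    (Fq : Type) [Field Fq] [Fintype Fq]
    (Λ : Type) [CommRing Λ] [Algebra Fq Λ]
    (R : Type) [CommRing R] [Algebra Fq R]
    (F : (Λ ⊗[Fq] R) →+* (Λ ⊗[Fq] R))
    (hF : ∀ (l : Λ) (r : R), F (l ⊗ₜ[Fq] r) = l ⊗ₜ[Fq] (r ^ Fintype.card Fq))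
    (M : Type) [AddCommGroup M] [Module (Λ ⊗[Fq] R) M] [Module.Finite (Λ ⊗[Fq] R) M]
    (φ : M →ₗ[Λ ⊗[Fq] R] Restrict F M) (hφ : IsBaseChangeAlong F φ)
    (hvan : ∀ 𝔪 : Ideal Λ, 𝔪.IsMaximal →
      (Ideal.map (Algebra.TensorProduct.includeLeftRingHom : Λ →+* Λ ⊗[Fq] R) 𝔪) •
        (⊤ : Submodule (Λ ⊗[Fq] R) M) = ⊤) :
    Subsingleton M := by
  have hF_eq :
      F = Algebra.TensorProduct.map (AlgHom.id Fq Λ) (FiniteField.frobeniusAlgHom Fq R) :=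
    RingHom.ext fun x ↦ by
      induction x using TensorProduct.induction_on with
      | zero => simp
      | tmul l r => simp [hF]
      | add x y hx hy => simp only [map_add, hx, hy]
  rw [← Module.annihilator_eq_top_iff (R := Λ ⊗[Fq] R)]
  refine Algebra.TensorProduct.ideal_eq_top_of_frobenius_stable ?_
    fun 𝔪 h𝔪 ↦ Module.annihilator_sup_eq_top_of_smul_top_eq_top (hvan 𝔪 h𝔪)
  have hstable := hφ.map_annihilator_le
  rwa [hF_eq] at hstable

/-- **Vanishing criterion for unit modules.** Let `R` be a connected Noetherian
`F_q`-algebra, `Λ` an `F_q`-algebra, `S = Λ ⊗[F_q] R`, `F : S → S` the Frobenius, and `M`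
a finitely generated `S`-module with a unit structure `φ : F*M ≅ M`. If for every maximal
ideal `𝔪 ⊆ Λ` the reduction `M ⊗_Λ Λ/𝔪` (i.e. `M/𝔪M`) is zero, then `M = 0`. -/
theorem unit_module_eq_zero_of_reductions_zero
    (Fq : Type) [Field Fq] [Fintype Fq]
    (Λ : Type) [CommRing Λ] [Algebra Fq Λ]
    (R : Type) [CommRing R] [Algebra Fq R] [IsNoetherianRing R]
    [ConnectedSpace (PrimeSpectrum R)]
    (F : (Λ ⊗[Fq] R) →+* (Λ ⊗[Fq] R))
    (hF : ∀ (l : Λ) (r : R), F (l ⊗ₜ[Fq] r) = l ⊗ₜ[Fq] (r ^ Fintype.card Fq))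
    (M : Type) [AddCommGroup M] [Module (Λ ⊗[Fq] R) M] [Module.Finite (Λ ⊗[Fq] R) M]
    (φ : M →ₗ[Λ ⊗[Fq] R] Restrict F M) (hφ : IsBaseChangeAlong F φ)
    (hvan : ∀ 𝔪 : Ideal Λ, 𝔪.IsMaximal →
      (Ideal.map (Algebra.TensorProduct.includeLeftRingHom : Λ →+* Λ ⊗[Fq] R) 𝔪) •
        (⊤ : Submodule (Λ ⊗[Fq] R) M) = ⊤) :
    Subsingleton M :=
  unit_module_eq_zero_of_reductions_zero_general Fq Λ R F hF M φ hφ hvan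
end
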